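/- For every integer n ≥ 1, every word u of length n over {a,b}, and all integers f ≥ 0 and g ≥ 0, the number of Catalan tableaux of index n+1 with profile u, exactly f ones in the first row, and exactly g+1 unrestricted rows equals the number of lattice paths η weakly below ω_u that have exactly f horizontal contacts with ω_u and exactly g trailing north steps. -/

import Mathlib

/-- A binary tree: empty, or a root with a left and a right subtree. -/
inductive BinTree : Type
  | nil : BinTree
  | node : BinTree → BinTree → BinTree
  deriving DecidableEq

/-- Number of vertices of a binary tree. -/
def BinTree.size : BinTree → ℕ
  | .nil => 0
  | .node l r => l.size + r.size + 1

/-- Length (number of vertices) of the left branch. -/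
def BinTree.leftBranchLen : BinTree → ℕ
  | .nil => 0
  | .node l _ => l.leftBranchLen + 1

/-- Length (number of vertices) of the right branch. -/
def BinTree.rightBranchLen : BinTree → ℕ
  | .nil => 0
  | .node _ r => r.rightBranchLen + 1

/-- Word over {a,b} (a = `true`, b = `false`) reading the vertices in symmetric
(in-)order; a vertex contributes `true` iff it has a right child. -/
def BinTree.canopyFull : BinTree → List Bool
  | .nil => []
  | .node l r => l.canopyFull ++ (decide (r ≠ BinTree.nil)) :: r.canopyFull

/-- The canopy of a binary tree with `n` vertices: the word `u₁ … u_{n-1}` over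
{a = `true`, b = `false`} with `uᵢ = a` iff the `i`-th vertex in symmetric order
has a right child.  (The last vertex in symmetric order never has a right child,
so it is dropped.) -/
def BinTree.canopy (B : BinTree) : List Bool := B.canopyFull.dropLast

/-- A Catalan tableau of index `n`: a partition `λ₁ ≥ … ≥ λ_k` with `λ₁ = n - k`,
drawn right-justified inside the `k × (n-k)` rectangle (rows bottom to top, row `i`
having `lam i` cells, occupying columns `j` with `m - lam i ≤ j < m` where
`m = n - k`), filled with 0's (`false`) and 1's (`true`) such that every column
contains exactly one 1 and no 0 has both a 1 below it in its column and a 1 to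
its right in its row.  Entries outside the diagram are forced to `false`. -/
structure CatalanTableau (n : ℕ) where
  k : ℕ
  m : ℕ
  hk : 0 < k
  hkm : k + m = n
  lam : Fin k → ℕ
  lam_le : ∀ i, lam i ≤ m
  lam_first : lam ⟨0, hk⟩ = m
  lam_anti : ∀ i j : Fin k, i ≤ j → lam j ≤ lam i
  f : Fin k → Fin m → Bool
  f_outside : ∀ (i : Fin k) (j : Fin m), (j : ℕ) < m - lam i → f i j = false
  col_one : ∀ j : Fin m, ∃! i : Fin k, f i j = true
  no_bad : ∀ (i : Fin k) (j : Fin m), m - lam i ≤ (j : ℕ) → f i j = false →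
    ¬ ((∃ i' : Fin k, i' < i ∧ f i' j = true) ∧
       (∃ j' : Fin m, (j : ℕ) < (j' : ℕ) ∧ f i j' = true))

/-- The profile of a Catalan tableau: the NW border of its Ferrers diagram read
from the bottom-left corner of the rectangle to its top-right corner
(a = `true` for a north step, b = `false` for an east step), with the first
letter (always a north step) deleted. -/
def CatalanTableau.profile {n : ℕ} (T : CatalanTableau n) : List Bool :=
  ((List.finRange T.k).flatMap (fun i =>
    true :: List.replicate
      (T.lam i - (if h : (i : ℕ) + 1 < T.k then T.lam ⟨(i : ℕ) + 1, h⟩ else 0)) false)).tail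

/-- Number of 1's in the first (bottom) row of a Catalan tableau. -/
noncomputable def CatalanTableau.onesFirstRow {n : ℕ} (T : CatalanTableau n) : ℕ :=
  Nat.card {j : Fin T.m // T.f ⟨0, T.hk⟩ j = true}

/-- An entry is restricted if it is a 0 (in a cell of the diagram) lying above
some 1 in its column. -/
def CatalanTableau.Restricted {n : ℕ} (T : CatalanTableau n)
    (i : Fin T.k) (j : Fin T.m) : Prop :=
  T.m - T.lam i ≤ (j : ℕ) ∧ T.f i j = false ∧ ∃ i' : Fin T.k, i' < i ∧ T.f i' j = true

/-- Number of unrestricted rows (rows of the rectangle containing no restricted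
entry). -/
noncomputable def CatalanTableau.unrestrictedRows {n : ℕ} (T : CatalanTableau n) : ℕ :=
  Nat.card {i : Fin T.k // ∀ j : Fin T.m, ¬ T.Restricted i j}

/-- `weaklyBelow ω η`: the lattice paths coded by `ω`, `η` (a = `true` = north
step, b = `false` = east step, both starting at the origin) have the same
endpoints and `η` never passes strictly above `ω`. -/
def weaklyBelow (ω η : List Bool) : Prop :=
  η.length = ω.length ∧ η.count true = ω.count true ∧
    ∀ t : ℕ, (η.take t).count true ≤ (ω.take t).count true

/-- Heights at which the successive east steps of a path occur. -/
def eastHeightsAux : ℕ → List Bool → List ℕ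
  | _, [] => []
  | h, true :: w => eastHeightsAux (h + 1) w
  | h, false :: w => h :: eastHeightsAux h w

def eastHeights (w : List Bool) : List ℕ := eastHeightsAux 0 w

/-- Number of horizontal contacts of two paths: unit east edges traversed by
both paths. -/
def contacts (ω η : List Bool) : ℕ :=
  ((eastHeights ω).zip (eastHeights η)).countP (fun p => p.1 == p.2)

/-- Number of trailing north steps of a path. -/
def trailingNorth (w : List Bool) : ℕ := (w.reverse.takeWhile (· == true)).length

/-- Number of left edges, i.e. of vertices having a left child. -/
def BinTree.leftEdgeCount : BinTree → ℕ
  | .nil => 0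
  | .node l r => l.leftEdgeCount + r.leftEdgeCount + (if l = BinTree.nil then 0 else 1)

/-- Number of vertices having no right child. -/
def BinTree.noRightCount : BinTree → ℕ
  | .nil => 0
  | .node l r => l.noRightCount + r.noRightCount + (if r = BinTree.nil then 1 else 0)

/-- Symmetric-order traversal recording, for each vertex, whether it has a left
child, whether it has a right child, and its right height (the second argument
is the right height of the current root). -/
def BinTree.inorderAux : BinTree → ℕ → List (Bool × Bool × ℕ)
  | .nil, _ => []
  | .node l r, h =>
      BinTree.inorderAux l h ++
        (decide (l ≠ BinTree.nil), decide (r ≠ BinTree.nil), h) :: BinTree.inorderAux r (h + 1)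

def BinTree.inorder (B : BinTree) : List (Bool × Bool × ℕ) := B.inorderAux 0

/-- The sequence `ρ₁, …, ρ_m`: right heights of the parents of the left edges,
the left edges being ordered by their parents in symmetric order. -/
def BinTree.rhoList (B : BinTree) : List ℕ :=
  (B.inorder.filter (fun v => v.1)).map (fun v => v.2.2)

def hsAux : List (Bool × Bool × ℕ) → ℕ → List ℕ
  | [], _ => []
  | v :: rest, c => if v.2.1 then hsAux rest (c + 1) else c :: hsAux rest c

/-- The sequence `h₁, …, h_m`: for each vertex with no right child (in symmetric
order, excluding the last vertex in symmetric order), the number of vertices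
preceding it in symmetric order that have a right child. -/
def BinTree.hList (B : BinTree) : List ℕ := (hsAux B.inorder 0).dropLast

/-- Leaves of the completion `γ(B)` in symmetric order, each recorded as `true`
if it is a left child of its parent and `false` if it is a right child; the
boolean argument records whether the current subtree sits as a left child. -/
def BinTree.gammaLeavesAux : BinTree → Bool → List Bool
  | .nil, isLeft => [isLeft]
  | .node l r, _ => BinTree.gammaLeavesAux l true ++ BinTree.gammaLeavesAux r false

/-- The word of the leaves of the complete binary tree `γ(B)` in symmetric order
(a = `true` for a left child, b = `false` for a right child). -/
def BinTree.leafWord : BinTree → List Bool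
  | .nil => []
  | .node l r => BinTree.gammaLeavesAux l true ++ BinTree.gammaLeavesAux r false


/-!
Record a tableau with profile `u` by the rows `r_j` of the `1`s of its columns, read left to
right. The tableau conditions say that `r_j` lies below the top `c_j` of column `j` and avoids
the rows restricted by earlier columns, column `j'` restricting the rows strictly between
`r_{j'}` and `c_{j'}`. Let `e_j` be the number of rows restricted by the first `j + 1` columns.
The lower the `1` of a column is placed, the more rows it restricts, so `r_j` is recovered from
`e_j`, and the sequences `e` that occur are exactly the weakly increasing ones with `e_j < c_j`:
the heights of the east steps of the paths weakly below `ω_u`. A `1` in the first row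
(`r_j = 0`) is an `e_j = c_j - 1`, i.e. a horizontal contact, and the last `e_j` counts all
restricted rows, so the path has one trailing north step fewer than the tableau has
unrestricted rows.
-/

open List

section General

lemma List.count_take_le {α : Type*} [BEq α] (l : List α) (a : α) (t : ℕ) :
    (l.take t).count a ≤ t :=
  count_le_length.trans (length_take_le t l)

lemma List.Forall₂.forall_le_of_forall_le {α : Type*} [Preorder α] {l₁ l₂ : List α}
    (h : Forall₂ (· ≤ ·) l₁ l₂) {K : α} (hK : ∀ y ∈ l₂, y ≤ K) : ∀ x ∈ l₁, x ≤ K := by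
  induction h with
  | nil => simp
  | cons hxy _ ih =>
    simp only [forall_mem_cons] at hK ⊢
    exact ⟨hxy.trans hK.1, ih hK.2⟩

lemma List.Pairwise.getElem_le_iff_lt_countP {α : Type*} [LinearOrder α] {l : List α}
    (hl : l.Pairwise (· ≤ ·)) {j : ℕ} (hj : j < l.length) (x : α) :
    l[j] ≤ x ↔ j < l.countP (· ≤ x) := by
  induction l generalizing j with
  | nil => simp at hj
  | cons y l ih =>
    obtain ⟨hy, hl⟩ := pairwise_cons.mp hl
    by_cases hyx : y ≤ x
    · cases j with
      | zero => simp [hyx]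
      | succ j => simp [hyx, ih hl (j := j) (by simpa using hj)]
    · have hzero : l.countP (· ≤ x) = 0 :=
        countP_eq_zero.mpr fun z hz => by simpa using fun hzx => hyx ((hy z hz).trans hzx)
      cases j with
      | zero => simp [hyx, hzero]
      | succ j =>
        have := hy (l[j]'(by simpa using hj)) (getElem_mem _)
        simpa [hyx, hzero] using fun h => hyx (this.trans h)

lemma Nat.card_subtype_fin_eq_countP_finRange {m : ℕ} (p : Fin m → Prop) [DecidablePred p] :
    Nat.card {j : Fin m // p j} = (finRange m).countP p := by
  rw [Nat.card_eq_fintype_card, Fintype.card_subtype, ← toFinset_finRange,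
    (nodup_finRange m).card_eq_countP]

lemma Nat.card_subtype_fin_val_notMem {k : ℕ} {R : Finset ℕ} (hR : ∀ x ∈ R, x < k) :
    Nat.card {i : Fin k // (i : ℕ) ∉ R} = k - R.card := by
  simp_rw [← Finset.mem_attachFin hR]
  rw [Nat.card_eq_fintype_card, Fintype.card_subtype_compl, Fintype.card_coe, Fintype.card_fin,
    Finset.card_attachFin]

lemma Nat.card_subtype_and_congr {α β : Type*} {p q : α → Prop} {p' q' : β → Prop}
    (e : {a // p a} ≃ {b // p' b}) (h : ∀ a, q a.1 ↔ q' (e a).1) :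
    Nat.card {a // p a ∧ q a} = Nat.card {b // p' b ∧ q' b} :=
  Nat.card_congr <| (Equiv.subtypeSubtypeEquivSubtypeInter p q).symm.trans <|
    (e.subtypeEquiv h).trans (Equiv.subtypeSubtypeEquivSubtypeInter p' q')

end General

section EastHeights

lemma eastHeightsAux_add (w : List Bool) (a b : ℕ) :
    eastHeightsAux (a + b) w = (eastHeightsAux a w).map (· + b) := by
  induction w generalizing a with
  | nil => rfl
  | cons x w ih =>
    cases x
    · simp [eastHeightsAux, ih]
    · simp only [eastHeightsAux, ← ih]
      rw [Nat.add_right_comm]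

lemma length_eastHeightsAux (a : ℕ) (w : List Bool) :
    (eastHeightsAux a w).length = w.count false := by
  induction w generalizing a with
  | nil => rfl
  | cons x w ih => cases x <;> simp [eastHeightsAux, ih]

lemma le_of_mem_eastHeightsAux {a x : ℕ} {w : List Bool} (hx : x ∈ eastHeightsAux a w) :
    a ≤ x := by
  induction w generalizing a with
  | nil => simp [eastHeightsAux] at hx
  | cons y w ih =>
    cases y
    · rcases mem_cons.mp hx with rfl | hx
      exacts [le_rfl, ih hx]
    · exact (ih hx).trans' (Nat.le_succ a)

lemma le_add_count_of_mem_eastHeightsAux {a x : ℕ} {w : List Bool}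
    (hx : x ∈ eastHeightsAux a w) : x ≤ a + w.count true := by
  induction w generalizing a with
  | nil => simp [eastHeightsAux] at hx
  | cons y w ih =>
    cases y
    · rcases mem_cons.mp hx with rfl | hx
      · simp
      · simpa using ih hx
    · have := ih hx
      simp only [count_cons_self]
      omega

lemma isChain_eastHeightsAux (a : ℕ) (w : List Bool) :
    (a :: eastHeightsAux a w).IsChain (· ≤ ·) := by
  rw [isChain_iff_pairwise]
  induction w generalizing a with
  | nil => exact pairwise_singleton _ a
  | cons y w ih =>
    refine pairwise_cons.mpr ⟨fun x hx => ?_, ?_⟩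
    · cases y
      exacts [le_of_mem_eastHeightsAux hx, (le_of_mem_eastHeightsAux hx).trans' (by simp)]
    · cases y
      exacts [ih a, (pairwise_cons.mp (ih (a + 1))).2]

lemma eastHeightsAux_replicate_true_append (d a : ℕ) (w : List Bool) :
    eastHeightsAux a (replicate d true ++ w) = eastHeightsAux (a + d) w := by
  induction d generalizing a with
  | zero => rfl
  | succ d ih => simp [replicate_succ, eastHeightsAux, ih, Nat.add_right_comm, Nat.add_assoc]

lemma eastHeightsAux_replicate_false_append (d a : ℕ) (w : List Bool) :
    eastHeightsAux a (replicate d false ++ w) = replicate d a ++ eastHeightsAux a w := by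
  induction d with
  | zero => rfl
  | succ d ih => simp [replicate_succ, eastHeightsAux, ih]

end EastHeights

section PathOfHeights

def pathOfHeights : ℕ → ℕ → List ℕ → List Bool
  | a, top, [] => replicate (top - a) true
  | a, top, e :: es => replicate (e - a) true ++ false :: pathOfHeights e top es

lemma eastHeightsAux_pathOfHeights {a top : ℕ} {es : List ℕ} (hes : (a :: es).IsChain (· ≤ ·)) :
    eastHeightsAux a (pathOfHeights a top es) = es := by
  induction es generalizing a with
  | nil => simpa [pathOfHeights, eastHeightsAux] using
    eastHeightsAux_replicate_true_append (top - a) a []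
  | cons e es ih =>
    obtain ⟨hae, hes⟩ := isChain_cons_cons.mp hes
    simp [pathOfHeights, eastHeightsAux_replicate_true_append, Nat.add_sub_cancel' hae,
      eastHeightsAux, ih hes]

lemma count_true_pathOfHeights {a top : ℕ} {es : List ℕ} (hes : (a :: es).IsChain (· ≤ ·))
    (htop : ∀ x ∈ a :: es, x ≤ top) : (pathOfHeights a top es).count true = top - a := by
  induction es generalizing a with
  | nil => simp [pathOfHeights]
  | cons e es ih =>
    obtain ⟨hae, hes⟩ := isChain_cons_cons.mp hes
    have he : e ≤ top := htop e (by simp)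
    rw [pathOfHeights, count_append, count_cons, ih hes (fun x hx => htop x (mem_cons_of_mem a hx))]
    simp only [count_replicate_self, Bool.false_eq_true, beq_iff_eq, if_false]
    omega

lemma count_false_pathOfHeights (a top : ℕ) (es : List ℕ) :
    (pathOfHeights a top es).count false = es.length := by
  induction es generalizing a with
  | nil => simp [pathOfHeights, count_replicate]
  | cons e es ih => simp [pathOfHeights, count_replicate, ih]

lemma pathOfHeights_eq_true_cons {a top : ℕ} {es : List ℕ} (hes : ∀ x ∈ es, a + 1 ≤ x)
    (htop : a + 1 ≤ top) : pathOfHeights a top es = true :: pathOfHeights (a + 1) top es := by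
  cases es with
  | nil =>
    simp only [pathOfHeights, Nat.sub_add_eq]
    rw [← replicate_succ, Nat.sub_add_cancel (by omega)]
  | cons e es =>
    have := hes e (by simp)
    simp only [pathOfHeights, Nat.sub_add_eq]
    rw [← cons_append, ← replicate_succ, Nat.sub_add_cancel (by omega)]

lemma pathOfHeights_eastHeightsAux (a : ℕ) (w : List Bool) :
    pathOfHeights a (a + w.count true) (eastHeightsAux a w) = w := by
  induction w generalizing a with
  | nil => simp [pathOfHeights, eastHeightsAux]
  | cons x w ih =>
    cases x
    · simp [eastHeightsAux, pathOfHeights, ih]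
    · rw [eastHeightsAux, count_cons_self, ← Nat.add_assoc, Nat.add_right_comm,
        pathOfHeights_eq_true_cons (fun _ => le_of_mem_eastHeightsAux) (by omega), ih]

lemma exists_pathOfHeights_eq_append {a top e : ℕ} {es : List ℕ} :
    ∃ w, pathOfHeights a top (e :: es) =
      w ++ false :: replicate (top - (e :: es).getLast (cons_ne_nil e es)) true := by
  induction es generalizing a e with
  | nil => exact ⟨replicate (e - a) true, rfl⟩
  | cons e' es ih =>
    obtain ⟨w, hw⟩ := @ih e e'
    exact ⟨replicate (e - a) true ++ false :: w, by simp [pathOfHeights] at hw ⊢; simp [hw]⟩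

lemma trailingNorth_append_false_replicate (w : List Bool) (k : ℕ) :
    trailingNorth (w ++ false :: replicate k true) = k := by
  simp [trailingNorth, takeWhile_append_of_pos]

lemma trailingNorth_pathOfHeights (a top : ℕ) (es : List ℕ) :
    trailingNorth (pathOfHeights a top es) = top - es.getLastD a := by
  cases es with
  | nil => simp [trailingNorth, pathOfHeights]
  | cons e es =>
    obtain ⟨w, hw⟩ := @exists_pathOfHeights_eq_append a top e es
    rw [hw, trailingNorth_append_false_replicate, getLastD_eq_getLast?,
      getLast?_eq_some_getLast (cons_ne_nil e es)]
    rfl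

end PathOfHeights

section WeaklyBelow

/-- The prefix condition says that `η` stays weakly below the path `replicate d true ++ u`. -/
lemma prefix_count_le_iff_forall₂_eastHeightsAux :
    (u η : List Bool) → (a d : ℕ) → η.length = u.length + d → η.count false = u.count false →
    ((∀ t, (η.take (t + d)).count true ≤ d + (u.take t).count true) ↔
      Forall₂ (· ≤ ·) (eastHeightsAux a η) (eastHeightsAux (a + d) u))
  | [], η, a, d, hlen, hcount => by
    have hη : eastHeightsAux a η = [] :=
      eq_nil_of_length_eq_zero (by simpa [length_eastHeightsAux] using hcount)
    simp only [hη, eastHeightsAux, Forall₂.nil, iff_true]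
    intro t
    have := count_le_length (a := true) (l := η.take (t + d))
    simp only [length_take, length_nil, Nat.zero_add] at this hlen
    omega
  | true :: u, η, a, d, hlen, hcount => by
    rw [show eastHeightsAux (a + d) (true :: u) = eastHeightsAux (a + (d + 1)) u from rfl,
      ← prefix_count_le_iff_forall₂_eastHeightsAux u η a (d + 1)
        (by simp only [length_cons] at hlen; omega) (by simpa using hcount)]
    refine ⟨fun h t => ?_, fun h t => ?_⟩
    · have := h (t + 1)
      rw [take_succ_cons, count_cons_self, Nat.add_right_comm] at this
      rw [← Nat.add_assoc]
      omega
    · cases t with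
      | zero => simpa using count_take_le η true d
      | succ t =>
        have := h t
        rw [← Nat.add_assoc] at this
        rw [take_succ_cons, count_cons_self, Nat.add_right_comm]
        omega
  | false :: u, false :: η, a, d, hlen, hcount => by
    rw [eastHeightsAux, eastHeightsAux, forall₂_cons, ← prefix_count_le_iff_forall₂_eastHeightsAux
      u η a d (by simp only [length_cons] at hlen; omega) (by simpa using hcount)]
    refine ⟨fun h => ⟨by omega, fun t => ?_⟩, fun h t => ?_⟩
    · simpa [Nat.add_right_comm t 1 d] using h (t + 1)
    · cases t with
      | zero => simpa using count_take_le (false :: η) true d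
      | succ t => simpa [Nat.add_right_comm t 1 d] using h.2 t
  | false :: u, true :: η, a, 0, _, hcount => by
    obtain ⟨x, xs, hx⟩ : ∃ x xs, eastHeightsAux (a + 1) η = x :: xs :=
      exists_cons_of_length_pos (by
        rw [length_eastHeightsAux]; simp at hcount; omega)
    have hax : a + 1 ≤ x := le_of_mem_eastHeightsAux (hx ▸ mem_cons_self)
    simp only [eastHeightsAux, hx, Nat.add_zero, forall₂_cons]
    exact iff_of_false (fun h => by simpa using h 1) (fun h => by omega)
  | false :: u, true :: η, a, d + 1, hlen, hcount => by
    rw [eastHeightsAux, show a + (d + 1) = a + 1 + d by omega,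
      ← prefix_count_le_iff_forall₂_eastHeightsAux (false :: u) η (a + 1) d
        (by simp only [length_cons] at hlen ⊢; omega) (by simpa using hcount)]
    refine forall_congr' fun t => ?_
    rw [← Nat.add_assoc, take_succ_cons, count_cons_self]
    omega
  | false :: u, [], _, _, _, hcount => by simp at hcount
termination_by u η => u.length + η.length

lemma weaklyBelow_iff_forall₂ (u η : List Bool) :
    weaklyBelow u η ↔ η.count false = u.count false ∧ η.count true = u.count true ∧
      Forall₂ (· ≤ ·) (eastHeights η) (eastHeights u) := by
  have hη := count_true_add_count_false η
  have hu := count_true_add_count_false u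
  refine ⟨fun ⟨hlen, htrue, hpre⟩ => ⟨by omega, htrue, ?_⟩, fun ⟨hfalse, htrue, hle⟩ => ?_⟩
  · exact (prefix_count_le_iff_forall₂_eastHeightsAux u η 0 0 hlen (by omega)).mp
      (by simpa using hpre)
  · have hlen : η.length = u.length := by omega
    refine ⟨hlen, htrue, by simpa using
      (prefix_count_le_iff_forall₂_eastHeightsAux u η 0 0 hlen hfalse).mpr hle⟩

/-- The heights of the columns of the Ferrers diagram whose NW border is `true :: u`. -/
def columnHeights (u : List Bool) : List ℕ := eastHeights (true :: u)

lemma length_columnHeights (u : List Bool) : (columnHeights u).length = u.count false :=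
  length_eastHeightsAux 1 u

lemma lt_length_columnHeights {u : List Bool} (j : Fin (u.count false)) :
    (j : ℕ) < (columnHeights u).length :=
  j.2.trans_eq (length_columnHeights u).symm

lemma pairwise_columnHeights (u : List Bool) : (columnHeights u).Pairwise (· ≤ ·) :=
  (pairwise_cons.mp (isChain_iff_pairwise.mp (isChain_eastHeightsAux 0 (true :: u)))).2

lemma le_of_mem_columnHeights {u : List Bool} {c : ℕ} (hc : c ∈ columnHeights u) :
    c ≤ u.count true + 1 := by
  simpa using le_add_count_of_mem_eastHeightsAux hc

lemma columnHeights_eq_map (u : List Bool) : columnHeights u = (eastHeights u).map (· + 1) :=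
  eastHeightsAux_add u 0 1

def AdmissibleCounts (h : ℕ) (cs es : List ℕ) : Prop :=
  (h :: es).IsChain (· ≤ ·) ∧ Forall₂ (· < ·) es cs

lemma forall₂_lt_columnHeights_iff {u : List Bool} {es : List ℕ} :
    Forall₂ (· < ·) es (columnHeights u) ↔ Forall₂ (· ≤ ·) es (eastHeights u) := by
  simp [columnHeights_eq_map, forall₂_map_right_iff]

lemma weaklyBelow_pathOfHeights {u : List Bool} {es : List ℕ}
    (hes : AdmissibleCounts 0 (columnHeights u) es) :
    weaklyBelow u (pathOfHeights 0 (u.count true) es) := by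
  obtain ⟨hchain, hlt⟩ := hes
  have hle := forall₂_lt_columnHeights_iff.mp hlt
  have hbound : ∀ x ∈ 0 :: es, x ≤ u.count true := by
    rintro x (_ | ⟨_, hx⟩)
    · exact Nat.zero_le _
    · exact hle.forall_le_of_forall_le (fun y hy => by
        simpa using le_add_count_of_mem_eastHeightsAux hy) _ hx
  rw [weaklyBelow_iff_forall₂, eastHeights, eastHeightsAux_pathOfHeights hchain]
  refine ⟨?_, ?_, hle⟩
  · rw [count_false_pathOfHeights, hle.length_eq, eastHeights, length_eastHeightsAux]
  · rw [count_true_pathOfHeights hchain hbound, Nat.sub_zero]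

lemma admissibleCounts_eastHeights {u η : List Bool} (h : weaklyBelow u η) :
    AdmissibleCounts 0 (columnHeights u) (eastHeights η) :=
  ⟨isChain_eastHeightsAux 0 η,
    forall₂_lt_columnHeights_iff.mpr ((weaklyBelow_iff_forall₂ u η).mp h).2.2⟩

lemma pathOfHeights_eastHeights {u η : List Bool} (h : weaklyBelow u η) :
    pathOfHeights 0 (u.count true) (eastHeights η) = η := by
  rw [eastHeights, ← h.2.1]
  simpa using pathOfHeights_eastHeightsAux 0 η

def admissibleCountsEquivWeaklyBelow (u : List Bool) :
    {es // AdmissibleCounts 0 (columnHeights u) es} ≃ {η // weaklyBelow u η} where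
  toFun es := ⟨pathOfHeights 0 (u.count true) es, weaklyBelow_pathOfHeights es.2⟩
  invFun η := ⟨eastHeights η, admissibleCounts_eastHeights η.2⟩
  left_inv es := Subtype.ext (eastHeightsAux_pathOfHeights es.2.1)
  right_inv η := Subtype.ext (pathOfHeights_eastHeights η.2)

lemma contacts_eq_countP (u η : List Bool) :
    contacts u η = ((columnHeights u).zip (eastHeights η)).countP fun p => p.2 + 1 == p.1 := by
  rw [contacts, columnHeights_eq_map, zip_map_left, countP_map]
  refine countP_congr fun ⟨x, y⟩ _ => ?_
  simp only [Function.comp, Prod.map, id, beq_iff_eq]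
  omega

end WeaklyBelow

section RowsAndCounts

open Finset

variable {S : Finset ℕ} {c : ℕ}

lemma card_union_Ioo_le_succ (S : Finset ℕ) (c r : ℕ) :
    #(S ∪ Ioo r c) ≤ #(S ∪ Ioo (r + 1) c) + 1 := by
  refine (card_le_card fun x hx => ?_).trans (card_insert_le (r + 1) _)
  simp only [mem_union, mem_Ioo, mem_insert] at hx ⊢
  rcases hx with hx | hx
  · exact .inr (.inl hx)
  · omega

lemma union_Ioo_eq_of_succ_mem {r : ℕ} (hr : r + 1 ∈ S) : S ∪ Ioo r c = S ∪ Ioo (r + 1) c := by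
  ext x
  simp only [mem_union, mem_Ioo]
  constructor
  · rintro (hx | hx)
    · exact .inl hx
    · rcases eq_or_lt_of_le (Nat.succ_le_of_lt hx.1) with rfl | h
      exacts [.inl hr, .inr ⟨h, hx.2⟩]
  · rintro (hx | hx)
    exacts [.inl hx, .inr ⟨by omega, hx.2⟩]

lemma card_union_Ioo_le (hS : S ⊆ Ioo 0 c) (r : ℕ) : #(S ∪ Ioo r c) ≤ c - 1 := by
  simpa using card_le_card (union_subset hS (Ioo_subset_Ioo_left (Nat.zero_le r)))

lemma card_union_Ioo_eq_pred_iff {r : ℕ} (hS : S ⊆ Ioo 0 c) (hrc : r < c) (hrS : r ∉ S) :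
    #(S ∪ Ioo r c) = c - 1 ↔ r = 0 := by
  refine ⟨fun h => ?_, ?_⟩
  · by_contra hr
    have hsub : S ∪ Ioo r c ⊂ Ioo 0 c := by
      refine (ssubset_iff_of_subset (union_subset hS (Ioo_subset_Ioo_left (Nat.zero_le r)))).mpr
        ⟨r, by simp; omega, by simp [hrS]⟩
    simpa [h] using card_lt_card hsub
  · rintro rfl
    simp [union_eq_right.mpr hS]

/-- The row in which the `1` of a column of height `c` must be placed so that `e` rows are
restricted afterwards, when the rows in `S` are restricted already. -/
noncomputable def rowOfCount (S : Finset ℕ) (c e : ℕ) : ℕ :=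
  sInf {r | #(S ∪ Ioo r c) ≤ e}

lemma rowOfCount_spec {e : ℕ} (hS : S ⊆ Ioo 0 c) (hSe : #S ≤ e) (hec : e < c) :
    rowOfCount S c e < c ∧ rowOfCount S c e ∉ S ∧ #(S ∪ Ioo (rowOfCount S c e) c) = e := by
  set p := rowOfCount S c e
  have hlast : c - 1 ∈ {r | #(S ∪ Ioo r c) ≤ e} := by
    simpa [show Ioo (c - 1) c = ∅ by ext; simp; omega] using hSe
  have hp : #(S ∪ Ioo p c) ≤ e := Nat.sInf_mem ⟨_, hlast⟩
  have hmin : ∀ r < p, e < #(S ∪ Ioo r c) := fun r hr =>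
    not_le.mp (show r ∉ {r | #(S ∪ Ioo r c) ≤ e} from Nat.notMem_of_lt_sInf hr)
  refine ⟨(Nat.sInf_le hlast).trans_lt (by omega), fun hpS => ?_, ?_⟩
  · obtain ⟨q, hq⟩ : ∃ q, p = q + 1 :=
      Nat.exists_eq_succ_of_ne_zero (mem_Ioo.mp (hS hpS)).1.ne'
    have := hmin q (by omega)
    rw [union_Ioo_eq_of_succ_mem (hq ▸ hpS), ← hq] at this
    omega
  · rcases Nat.eq_zero_or_pos p with hp0 | hpos
    · rw [hp0, union_eq_right.mpr hS, Nat.card_Ioo] at hp ⊢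
      omega
    · have := hmin (p - 1) (by omega)
      have := card_union_Ioo_le_succ S c (p - 1)
      rw [Nat.sub_add_cancel hpos] at this
      omega

lemma rowOfCount_card {r : ℕ} (hrc : r < c) (hrS : r ∉ S) :
    rowOfCount S c #(S ∪ Ioo r c) = r := by
  have hr : r ∈ {i | #(S ∪ Ioo i c) ≤ #(S ∪ Ioo r c)} :=
    show #(S ∪ Ioo r c) ≤ _ from le_rfl
  refine le_antisymm (Nat.sInf_le hr) (le_of_not_gt fun hlt => ?_)
  have hsub : insert r (S ∪ Ioo r c) ⊆ S ∪ Ioo (rowOfCount S c #(S ∪ Ioo r c)) c := by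
    intro x hx
    simp only [mem_insert, mem_union, mem_Ioo] at hx ⊢
    rcases hx with rfl | hx | hx
    · exact .inr ⟨hlt, hrc⟩
    · exact .inl hx
    · exact .inr ⟨by omega, hx.2⟩
  have := card_le_card hsub
  rw [card_insert_of_notMem (by simp [hrS])] at this
  have : #(S ∪ Ioo (rowOfCount S c #(S ∪ Ioo r c)) c) ≤ #(S ∪ Ioo r c) := Nat.sInf_mem ⟨r, hr⟩
  omega

/-- Rows `rs` for the `1`s of columns of heights `cs`, read left to right: no `1` may sit in a
row that an earlier column restricts, `S` being the rows restricted at the start. -/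
def AdmissibleRows : Finset ℕ → List ℕ → List ℕ → Prop
  | _, [], [] => True
  | S, c :: cs, r :: rs => r < c ∧ r ∉ S ∧ AdmissibleRows (S ∪ Ioo r c) cs rs
  | _, _, _ => False

def restrictedRows : Finset ℕ → List ℕ → List ℕ → Finset ℕ
  | S, c :: cs, r :: rs => restrictedRows (S ∪ Ioo r c) cs rs
  | S, _, _ => S

def restrictedCounts : Finset ℕ → List ℕ → List ℕ → List ℕ
  | S, c :: cs, r :: rs => #(S ∪ Ioo r c) :: restrictedCounts (S ∪ Ioo r c) cs rs
  | _, _, _ => []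

noncomputable def rowsOfCounts : Finset ℕ → List ℕ → List ℕ → List ℕ
  | S, c :: cs, e :: es => rowOfCount S c e :: rowsOfCounts (S ∪ Ioo (rowOfCount S c e) c) cs es
  | _, _, _ => []

def Compatible (S : Finset ℕ) (cs : List ℕ) : Prop :=
  cs.Pairwise (· ≤ ·) ∧ ∀ x ∈ S, 0 < x ∧ ∀ c ∈ cs, x < c

lemma Compatible.subset_Ioo {cs : List ℕ} (h : Compatible S (c :: cs)) : S ⊆ Ioo 0 c :=
  fun x hx => mem_Ioo.mpr ⟨(h.2 x hx).1, (h.2 x hx).2 c mem_cons_self⟩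

lemma Compatible.union_Ioo {cs : List ℕ} (h : Compatible S (c :: cs)) (r : ℕ) :
    Compatible (S ∪ Ioo r c) cs := by
  obtain ⟨hsorted, hS⟩ := h
  refine ⟨hsorted.of_cons, fun x hx => ?_⟩
  rcases mem_union.mp hx with hx | hx
  · exact ⟨(hS x hx).1, fun c' hc' => (hS x hx).2 c' (mem_cons_of_mem _ hc')⟩
  · have hx := mem_Ioo.mp hx
    exact ⟨by omega, fun c' hc' => hx.2.trans_le ((pairwise_cons.mp hsorted).1 c' hc')⟩

@[simp] lemma admissibleCounts_nil {h : ℕ} {es : List ℕ} : AdmissibleCounts h [] es ↔ es = [] := by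
  cases es <;> simp [AdmissibleCounts]

@[simp] lemma admissibleCounts_cons_nil {h : ℕ} {cs : List ℕ} :
    ¬ AdmissibleCounts h (c :: cs) [] := by
  simp [AdmissibleCounts]

@[simp] lemma admissibleCounts_cons_cons {h e : ℕ} {cs es : List ℕ} :
    AdmissibleCounts h (c :: cs) (e :: es) ↔ h ≤ e ∧ e < c ∧ AdmissibleCounts e cs es := by
  simp only [AdmissibleCounts, isChain_cons_cons, forall₂_cons]
  tauto

variable {cs rs es : List ℕ}

lemma admissibleCounts_restrictedCounts (hS : Compatible S cs) (hrs : AdmissibleRows S cs rs) :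
    AdmissibleCounts #S cs (restrictedCounts S cs rs) := by
  induction cs generalizing S rs with
  | nil => cases rs <;> simp_all [AdmissibleRows, restrictedCounts]
  | cons c cs ih =>
    cases rs with
    | nil => simp [AdmissibleRows] at hrs
    | cons r rs =>
      obtain ⟨hrc, -, hrs⟩ := hrs
      have := card_union_Ioo_le hS.subset_Ioo r
      exact admissibleCounts_cons_cons.mpr ⟨card_le_card subset_union_left, by omega,
        ih (hS.union_Ioo r) hrs⟩

lemma rowsOfCounts_restrictedCounts (hrs : AdmissibleRows S cs rs) :
    rowsOfCounts S cs (restrictedCounts S cs rs) = rs := by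
  induction cs generalizing S rs with
  | nil => cases rs <;> simp_all [AdmissibleRows, rowsOfCounts]
  | cons c cs ih =>
    cases rs with
    | nil => simp [AdmissibleRows] at hrs
    | cons r rs =>
      obtain ⟨hrc, hrS, hrs⟩ := hrs
      simp [restrictedCounts, rowsOfCounts, rowOfCount_card hrc hrS, ih hrs]

lemma rowsOfCounts_spec (hS : Compatible S cs) (hes : AdmissibleCounts #S cs es) :
    AdmissibleRows S cs (rowsOfCounts S cs es) ∧
      restrictedCounts S cs (rowsOfCounts S cs es) = es := by
  induction cs generalizing S es with
  | nil => simp_all [AdmissibleRows, restrictedCounts, rowsOfCounts]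
  | cons c cs ih =>
    cases es with
    | nil => simp at hes
    | cons e es =>
      obtain ⟨hSe, hec, hes⟩ := admissibleCounts_cons_cons.mp hes
      obtain ⟨hlt, hnotMem, hcard⟩ := rowOfCount_spec hS.subset_Ioo hSe hec
      obtain ⟨ih₁, ih₂⟩ := ih (hS.union_Ioo _) (hcard ▸ hes)
      exact ⟨⟨hlt, hnotMem, ih₁⟩, by simp [restrictedCounts, rowsOfCounts, hcard, ih₂]⟩

lemma count_zero_eq_countP_restrictedCounts (hS : Compatible S cs) (hrs : AdmissibleRows S cs rs) :
    rs.count 0 = (cs.zip (restrictedCounts S cs rs)).countP fun p => p.2 + 1 == p.1 := by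
  induction cs generalizing S rs with
  | nil => cases rs <;> simp_all [AdmissibleRows]
  | cons c cs ih =>
    cases rs with
    | nil => simp [AdmissibleRows] at hrs
    | cons r rs =>
      obtain ⟨hrc, hrS, hrs⟩ := hrs
      have hpred := card_union_Ioo_eq_pred_iff hS.subset_Ioo hrc hrS
      simp only [restrictedCounts, zip_cons_cons, countP_cons, count_cons, ih (hS.union_Ioo r) hrs,
        beq_iff_eq]
      congr 1
      rcases eq_or_ne r 0 with rfl | hr
      · have : #(S ∪ Ioo 0 c) + 1 = c := by have := hpred.mpr rfl; omega
        simp [this]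
      · have : #(S ∪ Ioo r c) + 1 ≠ c := fun h => hr (hpred.mp (by omega))
        simp [hr, this]

lemma getLastD_restrictedCounts (hlen : rs.length = cs.length) :
    (restrictedCounts S cs rs).getLastD #S = #(restrictedRows S cs rs) := by
  induction cs generalizing S rs with
  | nil => simp [restrictedCounts, restrictedRows]
  | cons c cs ih =>
    cases rs with
    | nil => simp at hlen
    | cons r rs =>
      rw [restrictedCounts, restrictedRows, getLastD_cons]
      exact ih (by simpa using hlen)

lemma mem_restrictedRows {x : ℕ} : x ∈ restrictedRows S cs rs ↔
    x ∈ S ∨ ∃ j, ∃ (hc : j < cs.length) (hr : j < rs.length), rs[j] < x ∧ x < cs[j] := by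
  induction cs generalizing S rs with
  | nil => simp [restrictedRows]
  | cons c cs ih =>
    cases rs with
    | nil => simp [restrictedRows]
    | cons r rs =>
      rw [restrictedRows, ih, mem_union]
      constructor
      · rintro ((hx | hx) | ⟨j, hc, hr, hx⟩)
        · exact .inl hx
        · exact .inr ⟨0, by simp, by simp, by simpa using hx⟩
        · exact .inr ⟨j + 1, by simpa using hc, by simpa using hr, by simpa using hx⟩
      · rintro (hx | ⟨_ | j, hc, hr, hx⟩)
        · exact .inl (.inl hx)
        · exact .inl (.inr (by simpa using hx))
        · exact .inr ⟨j, by simpa using hc, by simpa using hr, by simpa using hx⟩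

lemma admissibleRows_iff : AdmissibleRows S cs rs ↔ rs.length = cs.length ∧
    ∀ j (hc : j < cs.length) (hr : j < rs.length),
      rs[j] < cs[j] ∧ rs[j] ∉ restrictedRows S (cs.take j) (rs.take j) := by
  induction cs generalizing S rs with
  | nil => cases rs <;> simp [AdmissibleRows]
  | cons c cs ih =>
    cases rs with
    | nil => simp [AdmissibleRows]
    | cons r rs =>
      rw [AdmissibleRows, ih]
      constructor
      · rintro ⟨hrc, hrS, hlen, h⟩
        refine ⟨by simp [hlen], fun j hc hr => ?_⟩
        cases j with
        | zero => simpa [restrictedRows] using ⟨hrc, hrS⟩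
        | succ j => simpa [restrictedRows] using h j (by simpa using hc) (by simpa using hr)
      · rintro ⟨hlen, h⟩
        obtain ⟨hrc, hrS⟩ := h 0 (by simp) (by simp)
        exact ⟨by simpa using hrc, by simpa [restrictedRows] using hrS, by simpa using hlen,
          fun j hc hr => h (j + 1) (by simpa using hc) (by simpa using hr)⟩

lemma admissibleRows_iff_getElem : AdmissibleRows S cs rs ↔ rs.length = cs.length ∧
    ∀ j (hc : j < cs.length) (hr : j < rs.length), rs[j] < cs[j] ∧ rs[j] ∉ S ∧
      ∀ j' (hc' : j' < cs.length) (hr' : j' < rs.length), j' < j →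
        ¬ (rs[j'] < rs[j] ∧ rs[j] < cs[j']) := by
  rw [admissibleRows_iff]
  refine and_congr_right fun _ => forall₃_congr fun j hc hr => and_congr_right fun _ => ?_
  rw [mem_restrictedRows]
  simp only [getElem_take, length_take, lt_inf_iff, exists_and_right, exists_and_left, not_or,
    not_exists, not_and, not_lt, forall_and_index, forall_exists_index, and_congr_right_iff]
  exact fun _ => ⟨fun h j' hc' hr' hlt hlt' => h j' hlt hr' hlt' hlt hc',
    fun h j' hlt hr' hlt' _ hc' => h j' hc' hr' hlt hlt'⟩

lemma restrictedRows_subset {K : ℕ} (hK : ∀ c ∈ cs, c ≤ K) :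
    restrictedRows S cs rs ⊆ S ∪ Ioo 0 K := by
  intro x hx
  rcases mem_restrictedRows.mp hx with hx | ⟨j, hc, hr, hlt, hlt'⟩
  · exact mem_union_left _ hx
  · exact mem_union_right _ (mem_Ioo.mpr ⟨by omega, hlt'.trans_le (hK _ (getElem_mem hc))⟩)

lemma compatible_empty_columnHeights (u : List Bool) : Compatible ∅ (columnHeights u) :=
  ⟨pairwise_columnHeights u, by simp⟩

lemma restrictedRows_empty_columnHeights_subset (u : List Bool) (rs : List ℕ) :
    restrictedRows ∅ (columnHeights u) rs ⊆ Ioo 0 (u.count true + 1) := by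
  simpa using restrictedRows_subset (S := ∅) (rs := rs) fun _ => le_of_mem_columnHeights

lemma AdmissibleRows.length_eq_count_false {u : List Bool}
    (h : AdmissibleRows ∅ (columnHeights u) rs) : rs.length = u.count false := by
  rw [(admissibleRows_iff.mp h).1, length_columnHeights]

lemma AdmissibleRows.lt_length {u : List Bool} (h : AdmissibleRows ∅ (columnHeights u) rs)
    (j : Fin (u.count false)) : (j : ℕ) < rs.length :=
  j.2.trans_eq h.length_eq_count_false.symm

lemma AdmissibleRows.getElem_lt {u : List Bool} (h : AdmissibleRows ∅ (columnHeights u) rs)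
    {j : ℕ} (hj : j < rs.length) : rs[j] < u.count true + 1 := by
  have hc : j < (columnHeights u).length := by
    rwa [length_columnHeights, ← h.length_eq_count_false]
  exact ((admissibleRows_iff.mp h).2 j hc hj).1.trans_le
    (le_of_mem_columnHeights (getElem_mem hc))

noncomputable def admissibleRowsEquivCounts (hS : Compatible S cs) :
    {rs // AdmissibleRows S cs rs} ≃ {es // AdmissibleCounts #S cs es} where
  toFun rs := ⟨restrictedCounts S cs rs, admissibleCounts_restrictedCounts hS rs.2⟩
  invFun es := ⟨rowsOfCounts S cs es, (rowsOfCounts_spec hS es.2).1⟩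
  left_inv rs := Subtype.ext (rowsOfCounts_restrictedCounts rs.2)
  right_inv es := Subtype.ext (rowsOfCounts_spec hS es.2).2

end RowsAndCounts

section Border

/-- The NW border of the right-justified Ferrers diagram whose rows, read bottom to top, are
each longer than the next by `d₀, d₁, …` (the last entry being the length of the top row). -/
def borderOfDiffs : List ℕ → List Bool
  | [] => []
  | d :: ds => true :: (replicate d false ++ borderOfDiffs ds)

/-- The row-length differences of the diagram whose NW border is `true :: w`. -/
def rowDiffs : List Bool → List ℕ
  | [] => [0]
  | true :: w => 0 :: rowDiffs w
  | false :: w => ((rowDiffs w).headD 0 + 1) :: (rowDiffs w).tail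

lemma exists_rowDiffs_eq_cons (w : List Bool) : ∃ d ds, rowDiffs w = d :: ds := by
  cases w with
  | nil => exact ⟨0, [], rfl⟩
  | cons b w => cases b <;> exact ⟨_, _, rfl⟩

lemma rowDiffs_replicate_false_append (k : ℕ) (w : List Bool) :
    rowDiffs (replicate k false ++ w) = ((rowDiffs w).headD 0 + k) :: (rowDiffs w).tail := by
  induction k with
  | zero => obtain ⟨d, ds, h⟩ := exists_rowDiffs_eq_cons w; simp [h]
  | succ k ih => simp [replicate_succ, rowDiffs, ih, Nat.add_assoc]

lemma borderOfDiffs_rowDiffs (w : List Bool) : borderOfDiffs (rowDiffs w) = true :: w := by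
  induction w with
  | nil => rfl
  | cons b w ih =>
    obtain ⟨d, ds, h⟩ := exists_rowDiffs_eq_cons w
    rw [h, borderOfDiffs, cons.injEq] at ih
    cases b <;> simp [rowDiffs, borderOfDiffs, h, replicate_succ, ih]

lemma rowDiffs_tail_borderOfDiffs {ds : List ℕ} (hds : ds ≠ []) :
    rowDiffs (borderOfDiffs ds).tail = ds := by
  induction ds with
  | nil => contradiction
  | cons d ds ih =>
    rcases eq_or_ne ds [] with rfl | hne
    · simpa [borderOfDiffs, rowDiffs] using rowDiffs_replicate_false_append d []
    · obtain ⟨d', ds', rfl⟩ := exists_cons_of_ne_nil hne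
      simp [borderOfDiffs, rowDiffs_replicate_false_append, rowDiffs, ← ih hne]

lemma length_rowDiffs (w : List Bool) : (rowDiffs w).length = w.count true + 1 := by
  induction w with
  | nil => rfl
  | cons b w ih =>
    obtain ⟨d, ds, h⟩ := exists_rowDiffs_eq_cons w
    cases b <;> simp_all [rowDiffs]

lemma sum_rowDiffs (w : List Bool) : (rowDiffs w).sum = w.count false := by
  induction w with
  | nil => rfl
  | cons b w ih =>
    obtain ⟨d, ds, h⟩ := exists_rowDiffs_eq_cons w
    cases b <;> simp_all [rowDiffs]; omega

lemma borderOfDiffs_map {α : Type*} (g : α → ℕ) (l : List α) :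
    borderOfDiffs (l.map g) = l.flatMap fun a => true :: replicate (g a) false := by
  induction l with
  | nil => rfl
  | cons a l ih => simp [borderOfDiffs, ih]

lemma countP_le_eastHeightsAux_borderOfDiffs (ds : List ℕ) (a i : ℕ) :
    (eastHeightsAux a (borderOfDiffs ds)).countP (· ≤ i) = (ds.take (i - a)).sum := by
  induction ds generalizing a with
  | nil => simp [borderOfDiffs, eastHeightsAux]
  | cons d ds ih =>
    rw [borderOfDiffs, eastHeightsAux, eastHeightsAux_replicate_false_append, countP_append,
      countP_replicate, ih]
    by_cases hai : a + 1 ≤ i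
    · rw [show i - a = i - (a + 1) + 1 by omega, take_succ_cons, sum_cons]
      simp [hai]
    · simp [hai, show i - a = 0 by omega, show i - (a + 1) = 0 by omega]

/-- The cell in row `i`, column `j` of the diagram with NW border `true :: u` exists iff the
row, of length `((rowDiffs u).drop i).sum`, reaches column `j` from the right. -/
lemma lt_getElem_columnHeights_iff (u : List Bool) (i : ℕ) {j : ℕ}
    (hj : j < (columnHeights u).length) :
    i < (columnHeights u)[j] ↔ u.count false - ((rowDiffs u).drop i).sum ≤ j := by
  have hcount : (columnHeights u).countP (· ≤ i) = ((rowDiffs u).take i).sum := by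
    have : columnHeights u = eastHeightsAux 0 (borderOfDiffs (rowDiffs u)) := by
      rw [borderOfDiffs_rowDiffs]; rfl
    simpa [this] using countP_le_eastHeightsAux_borderOfDiffs (rowDiffs u) 0 i
  have hsum := sum_take_add_sum_drop (rowDiffs u) i
  rw [sum_rowDiffs] at hsum
  rw [← not_le, (pairwise_columnHeights u).getElem_le_iff_lt_countP hj, hcount]
  omega

end Border

namespace CatalanTableau

variable {n : ℕ}

section

variable (T : CatalanTableau n)

def rowDiff (i : Fin T.k) : ℕ :=
  T.lam i - if h : (i : ℕ) + 1 < T.k then T.lam ⟨i + 1, h⟩ else 0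

lemma profile_eq_tail_borderOfDiffs :
    T.profile = (borderOfDiffs ((finRange T.k).map T.rowDiff)).tail := by
  rw [borderOfDiffs_map]
  rfl

lemma rowDiffs_profile : rowDiffs T.profile = (finRange T.k).map T.rowDiff := by
  rw [profile_eq_tail_borderOfDiffs, rowDiffs_tail_borderOfDiffs (by simp [T.hk.ne'])]

lemma map_rowDiff_eq {l : List ℕ} (hl : l.length = T.k)
    (hlam : ∀ i : Fin T.k, T.lam i = (l.drop i).sum) : (finRange T.k).map T.rowDiff = l := by
  refine ext_getElem (by simp [hl]) fun i hi hi' => ?_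
  have hik : i < T.k := by simpa using hi
  rw [getElem_map, getElem_finRange, rowDiff, Fin.cast_mk, hlam, drop_eq_getElem_cons hi', sum_cons]
  split_ifs with hnext
  · rw [hlam]
    simp
  · have : l.length ≤ i + 1 := by simp only at hnext; omega
    simp [drop_eq_nil_of_le this]

lemma k_eq_count_true_profile : T.k = T.profile.count true + 1 := by
  simpa [← length_rowDiffs] using (congrArg length T.rowDiffs_profile).symm

lemma sum_drop_rowDiffs_profile {i : ℕ} (hi : i < T.k) :
    ((rowDiffs T.profile).drop i).sum = T.lam ⟨i, hi⟩ := by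
  rw [rowDiffs_profile]
  induction h : T.k - i generalizing i with
  | zero => omega
  | succ j ih =>
    have hlen : i < ((finRange T.k).map T.rowDiff).length := by simpa using hi
    rw [drop_eq_getElem_cons hlen, sum_cons, getElem_map, getElem_finRange]
    by_cases hnext : i + 1 < T.k
    · have := T.lam_anti ⟨i, hi⟩ ⟨i + 1, hnext⟩ (by simp [Fin.le_def])
      simp only [rowDiff, Fin.cast_mk, dif_pos hnext, ih hnext (by omega)]
      omega
    · rw [drop_eq_nil_of_le (by simpa using hnext)]
      simp [rowDiff, dif_neg hnext]

lemma m_eq_count_false_profile : T.m = T.profile.count false := by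
  rw [← T.lam_first, ← sum_drop_rowDiffs_profile, drop_zero, sum_rowDiffs]

lemma lt_getElem_columnHeights_profile_iff (i : Fin T.k) {j : ℕ}
    (hj : j < (columnHeights T.profile).length) :
    (i : ℕ) < (columnHeights T.profile)[j] ↔ T.m - T.lam i ≤ j := by
  rw [lt_getElem_columnHeights_iff, sum_drop_rowDiffs_profile _ i.2, m_eq_count_false_profile]

noncomputable def oneRow (j : Fin T.m) : Fin T.k := (T.col_one j).choose

lemma f_eq_true_iff {i : Fin T.k} {j : Fin T.m} : T.f i j = true ↔ i = T.oneRow j :=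
  ⟨(T.col_one j).choose_spec.2 i, fun h => h ▸ (T.col_one j).choose_spec.1⟩

lemma f_oneRow (j : Fin T.m) : T.f (T.oneRow j) j = true :=
  T.f_eq_true_iff.mpr rfl

lemma sub_lam_le_of_f_eq_true {i : Fin T.k} {j : Fin T.m} (h : T.f i j = true) :
    T.m - T.lam i ≤ j := by
  by_contra hlt
  simp [T.f_outside i j (by omega)] at h

noncomputable def rowsOfOnes : List ℕ := (finRange T.m).map fun j => (T.oneRow j : ℕ)

@[simp] lemma length_rowsOfOnes : T.rowsOfOnes.length = T.m := by simp [rowsOfOnes]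

@[simp] lemma getElem_rowsOfOnes {j : ℕ} (hj : j < T.rowsOfOnes.length) :
    T.rowsOfOnes[j] = T.oneRow ⟨j, by simpa using hj⟩ := by
  simp [rowsOfOnes]

lemma admissibleRows_rowsOfOnes : AdmissibleRows ∅ (columnHeights T.profile) T.rowsOfOnes := by
  have hm : (columnHeights T.profile).length = T.m := by
    rw [length_columnHeights, m_eq_count_false_profile]
  rw [admissibleRows_iff_getElem]
  refine ⟨by simp [hm], fun j hc hr => ⟨?_, by simp, fun j' hc' hr' hlt ⟨hbelow, hcell⟩ => ?_⟩⟩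
  · rw [getElem_rowsOfOnes, lt_getElem_columnHeights_profile_iff]
    exact T.sub_lam_le_of_f_eq_true (T.f_oneRow _)
  · -- Otherwise the cell of column `j'` in the row of the `1` of column `j` is a `0` with a `1`
    -- below it and a `1` to its right.
    simp only [getElem_rowsOfOnes] at hbelow hcell
    rw [lt_getElem_columnHeights_profile_iff] at hcell
    refine T.no_bad _ ⟨j', by simpa using hr'⟩ hcell ?_ ⟨⟨_, hbelow, T.f_oneRow _⟩,
      ⟨⟨j, by simpa using hr⟩, hlt, T.f_oneRow _⟩⟩
    rw [Bool.eq_false_iff, Ne, f_eq_true_iff]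
    exact fun h => (h ▸ hbelow).false

end

section OfRows

variable {u : List Bool} {rs : List ℕ}

noncomputable def ofRows (hu : u.length = n) (h : AdmissibleRows ∅ (columnHeights u) rs) :
    CatalanTableau (n + 1) where
  k := u.count true + 1
  m := u.count false
  hk := Nat.succ_pos _
  hkm := by have := count_true_add_count_false u; omega
  lam i := ((rowDiffs u).drop i).sum
  lam_le i := by
    rw [← sum_rowDiffs, ← sum_take_add_sum_drop (rowDiffs u) i]
    exact Nat.le_add_left _ _
  lam_first := by simp [sum_rowDiffs]
  lam_anti i i' hii' := by
    rw [← Nat.add_sub_cancel' (Fin.le_def.mp hii'), ← drop_drop,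
      ← sum_take_add_sum_drop (drop i (rowDiffs u)) (i' - i)]
    exact Nat.le_add_left _ _
  f i j := decide (rs[(j : ℕ)]'(h.lt_length j) = i)
  f_outside i j hj := by
    have hrow := ((admissibleRows_iff.mp h).2 j (lt_length_columnHeights j) (h.lt_length j)).1
    have := (lt_getElem_columnHeights_iff u i (lt_length_columnHeights j)).not.mpr (by omega)
    simp only [decide_eq_false_iff_not]
    omega
  col_one j := ⟨⟨_, h.getElem_lt (h.lt_length j)⟩, by simp,
    fun i hi => Fin.ext (of_decide_eq_true hi).symm⟩
  no_bad i j hcell _ := by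
    rintro ⟨⟨i', hi'i, hi'⟩, ⟨j', hjj', hj'⟩⟩
    refine ((admissibleRows_iff_getElem.mp h).2 j' (lt_length_columnHeights j')
      (h.lt_length j')).2.2 j (lt_length_columnHeights j) (h.lt_length j) hjj' ?_
    simp only [decide_eq_true_eq] at hi' hj'
    rw [hi', hj', lt_getElem_columnHeights_iff]
    exact ⟨hi'i, hcell⟩

lemma profile_ofRows (hu : u.length = n) (h : AdmissibleRows ∅ (columnHeights u) rs) :
    (ofRows hu h).profile = u := by
  rw [profile_eq_tail_borderOfDiffs, map_rowDiff_eq _ (length_rowDiffs u) fun _ => rfl,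
    borderOfDiffs_rowDiffs, tail_cons]

lemma rowsOfOnes_ofRows (hu : u.length = n) (h : AdmissibleRows ∅ (columnHeights u) rs) :
    (ofRows hu h).rowsOfOnes = rs := by
  refine ext_getElem (by simp [h.length_eq_count_false, ofRows]) fun j hj hj' => ?_
  have hone : (ofRows hu h).f ⟨rs[j], h.getElem_lt hj'⟩ ⟨j, by simpa using hj⟩ = true := by
    simp [ofRows]
  rw [getElem_rowsOfOnes, ← (f_eq_true_iff _).mp hone]

end OfRows

lemma ext {T T' : CatalanTableau n} (hk : T.k = T'.k) (hm : T.m = T'.m)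
    (hlam : ∀ i (h : i < T.k) (h' : i < T'.k), T.lam ⟨i, h⟩ = T'.lam ⟨i, h'⟩)
    (hf : ∀ i j (hi : i < T.k) (hj : j < T.m) (hi' : i < T'.k) (hj' : j < T'.m),
      T.f ⟨i, hi⟩ ⟨j, hj⟩ = T'.f ⟨i, hi'⟩ ⟨j, hj'⟩) : T = T' := by
  obtain ⟨k, m, _, _, lam, _, _, _, f, _, _, _⟩ := T
  obtain ⟨k', m', _, _, lam', _, _, _, f', _, _, _⟩ := T'
  dsimp only at hk hm hlam hf
  subst hk hm
  obtain rfl : lam = lam' := funext fun i => hlam i i.2 i.2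
  obtain rfl : f = f' := funext₂ fun i j => hf i j i.2 j.2 i.2 j.2
  rfl

lemma ofRows_rowsOfOnes (T : CatalanTableau (n + 1)) (hu : T.profile.length = n) :
    ofRows hu T.admissibleRows_rowsOfOnes = T := by
  refine CatalanTableau.ext T.k_eq_count_true_profile.symm T.m_eq_count_false_profile.symm
    (fun i _ h' => T.sum_drop_rowDiffs_profile h') fun i j _ _ hi' hj' => ?_
  show decide (T.rowsOfOnes[j]'(by simpa using hj') = i) = _
  rw [getElem_rowsOfOnes, Bool.eq_iff_iff, decide_eq_true_iff, f_eq_true_iff, Fin.ext_iff]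
  exact eq_comm

noncomputable def profileEquivAdmissibleRows (u : List Bool) (hu : u.length = n) :
    {T : CatalanTableau (n + 1) // T.profile = u} ≃
      {rs // AdmissibleRows ∅ (columnHeights u) rs} where
  toFun T' := ⟨T'.1.rowsOfOnes, by obtain ⟨T', rfl⟩ := T'; exact T'.admissibleRows_rowsOfOnes⟩
  invFun rs := ⟨ofRows hu rs.2, profile_ofRows hu rs.2⟩
  left_inv := by
    rintro ⟨T', rfl⟩
    exact Subtype.ext (ofRows_rowsOfOnes T' hu)
  right_inv rs := Subtype.ext (rowsOfOnes_ofRows hu rs.2)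

section

variable (T : CatalanTableau n)

lemma onesFirstRow_eq_count_zero : T.onesFirstRow = T.rowsOfOnes.count 0 := by
  rw [onesFirstRow, Nat.card_subtype_fin_eq_countP_finRange, rowsOfOnes, count, countP_map]
  refine countP_congr fun j _ => ?_
  simp only [decide_eq_true_eq, f_eq_true_iff, Fin.ext_iff, Function.comp, beq_iff_eq]
  exact eq_comm

lemma lt_length_columnHeights_profile (j : Fin T.m) :
    (j : ℕ) < (columnHeights T.profile).length := by
  simp [length_columnHeights, ← m_eq_count_false_profile]

lemma restricted_iff (i : Fin T.k) (j : Fin T.m) : T.Restricted i j ↔ T.oneRow j < i ∧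
    (i : ℕ) < (columnHeights T.profile)[(j : ℕ)]'(T.lt_length_columnHeights_profile j) := by
  rw [Restricted, lt_getElem_columnHeights_profile_iff]
  constructor
  · rintro ⟨hcell, -, i', hi', hone⟩
    exact ⟨(T.f_eq_true_iff.mp hone) ▸ hi', hcell⟩
  · rintro ⟨hlt, hcell⟩
    refine ⟨hcell, ?_, _, hlt, T.f_oneRow _⟩
    rw [Bool.eq_false_iff, Ne, f_eq_true_iff]
    exact fun h => (h ▸ hlt).false

lemma exists_restricted_iff (i : Fin T.k) : (∃ j, T.Restricted i j) ↔
    (i : ℕ) ∈ restrictedRows ∅ (columnHeights T.profile) T.rowsOfOnes := by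
  simp only [restricted_iff, mem_restrictedRows, Finset.notMem_empty, false_or]
  constructor
  · rintro ⟨j, hlt, hcell⟩
    exact ⟨j, T.lt_length_columnHeights_profile j, by simp, by simpa using hlt, hcell⟩
  · rintro ⟨j, hc, hr, hlt, hcell⟩
    exact ⟨⟨j, by simpa using hr⟩, by simpa using hlt, hcell⟩

lemma unrestrictedRows_eq :
    T.unrestrictedRows = T.k - (restrictedRows ∅ (columnHeights T.profile) T.rowsOfOnes).card := by
  have hR : ∀ x ∈ restrictedRows ∅ (columnHeights T.profile) T.rowsOfOnes, x < T.k := fun x hx => by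
    have := Finset.mem_Ioo.mp (restrictedRows_empty_columnHeights_subset _ _ hx)
    rw [k_eq_count_true_profile]
    exact this.2
  rw [unrestrictedRows, ← Nat.card_subtype_fin_val_notMem hR]
  exact Nat.card_congr <| Equiv.subtypeEquivRight fun i => by
    rw [← exists_restricted_iff, not_exists]

end

noncomputable def equivWeaklyBelow (u : List Bool) (hu : u.length = n) :
    {T : CatalanTableau (n + 1) // T.profile = u} ≃ {η // weaklyBelow u η} :=
  (profileEquivAdmissibleRows u hu).trans <|
    (admissibleRowsEquivCounts (compatible_empty_columnHeights u)).trans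
      (admissibleCountsEquivWeaklyBelow u)

section

variable {u : List Bool} (hu : u.length = n) (T : CatalanTableau (n + 1)) (hT : T.profile = u)

lemma equivWeaklyBelow_apply : (equivWeaklyBelow u hu ⟨T, hT⟩ : List Bool) =
    pathOfHeights 0 (u.count true) (restrictedCounts ∅ (columnHeights u) T.rowsOfOnes) :=
  rfl

lemma contacts_equivWeaklyBelow : contacts u (equivWeaklyBelow u hu ⟨T, hT⟩) = T.onesFirstRow := by
  subst hT
  have hcounts : AdmissibleCounts 0 _ _ := admissibleCounts_restrictedCounts
    (compatible_empty_columnHeights T.profile) T.admissibleRows_rowsOfOnes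
  rw [equivWeaklyBelow_apply, contacts_eq_countP, eastHeights,
    eastHeightsAux_pathOfHeights hcounts.1, onesFirstRow_eq_count_zero,
    count_zero_eq_countP_restrictedCounts (compatible_empty_columnHeights _)
      T.admissibleRows_rowsOfOnes]

lemma trailingNorth_equivWeaklyBelow :
    trailingNorth (equivWeaklyBelow u hu ⟨T, hT⟩) + 1 = T.unrestrictedRows := by
  subst hT
  have hlen := (admissibleRows_iff.mp T.admissibleRows_rowsOfOnes).1
  have hcard :=
    Finset.card_le_card (restrictedRows_empty_columnHeights_subset T.profile T.rowsOfOnes)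
  rw [Nat.card_Ioo] at hcard
  rw [equivWeaklyBelow_apply, trailingNorth_pathOfHeights, unrestrictedRows_eq,
    k_eq_count_true_profile, ← Finset.card_empty, getLastD_restrictedCounts hlen]
  omega

end

end CatalanTableau

theorem card_catalanTableau_refined_eq_card_paths_refined_general
    (n : ℕ) (u : List Bool) (hu : u.length = n) (f g : ℕ) :
    Nat.card {T : CatalanTableau (n + 1) //
        T.profile = u ∧ T.onesFirstRow = f ∧ T.unrestrictedRows = g + 1} =
      Nat.card {η : List Bool //
        weaklyBelow u η ∧ contacts u η = f ∧ trailingNorth η = g} := by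
  refine Nat.card_subtype_and_congr (CatalanTableau.equivWeaklyBelow u hu) fun ⟨T, hT⟩ => ?_
  rw [CatalanTableau.contacts_equivWeaklyBelow, ← CatalanTableau.trailingNorth_equivWeaklyBelow,
    Nat.add_right_cancel_iff]

/-- For every integer `n ≥ 1`, every word `u` of length `n` over
`{a, b}`, and all integers `f ≥ 0` and `g ≥ 0`, the number of Catalan tableaux
of index `n + 1` with profile `u`, exactly `f` ones in the first row, and
exactly `g + 1` unrestricted rows equals the number of lattice paths `η` weakly
below `ω_u` that have exactly `f` horizontal contacts with `ω_u` and exactly `g`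
trailing north steps. -/
theorem card_catalanTableau_refined_eq_card_paths_refined
    (n : ℕ) (hn : 1 ≤ n) (u : List Bool) (hu : u.length = n) (f g : ℕ) :
    Nat.card {T : CatalanTableau (n + 1) //
        T.profile = u ∧ T.onesFirstRow = f ∧ T.unrestrictedRows = g + 1} =
      Nat.card {η : List Bool //
        weaklyBelow u η ∧ contacts u η = f ∧ trailingNorth η = g} :=
  card_catalanTableau_refined_eq_card_paths_refined_general n u hu f g
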